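/- arXiv:1112.3321 — 2 statements merged into one kernel-verified Lean document; each statement's English description precedes it below -/
import Mathlib

section
/- Let n1 ≥ 3 be an odd integer and M a positive integer. Suppose p1 = ρ1 · 2^(M/w1) + 1 and p2 = ρ2 · 2^(M/w2) + 1 are primes, where w1 < w2 are odd integers ≥ 3 dividing M, ρ1, ρ2 are positive integers with n1 = ρ1^{w1} = ρ2^{w2}. Then this situation is impossible; i.e., there is at most one odd w ≥ 3 dividing M with n1 = ρ^w and ρ·2^{M/w} + 1 prime. -/
/-!
Since `ρ1 ^ w1 = ρ2 ^ w2`, we have `ρ1 = c ^ e` with `e = w2 / gcd w1 w2`, and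
`M / w1 = e * k` with `k = M / lcm w1 w2 ≥ 1`. Hence `p1 = (c * 2 ^ k) ^ e + 1`. The exponent `e`
is odd (it divides `w2`) and differs from `1` (as `w2 ∤ w1`), so `p1` is not prime: a prime
`a ^ e + 1` with `a > 1` forces `e` to be a power of two.
-/

theorem Nat.div_eq_div_gcd_mul_div_lcm {m n M : ℕ} (hm : m ∣ M) (hn : n ∣ M) :
    M / m = n / m.gcd n * (M / m.lcm n) := by
  have hlcm : m.lcm n = m * (n / m.gcd n) := Nat.mul_div_assoc m (Nat.gcd_dvd_right m n)
  have hdvd : m * (n / m.gcd n) ∣ M := hlcm ▸ Nat.lcm_dvd hm hn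
  rw [hlcm, ← Nat.div_div_eq_div_mul, Nat.mul_div_cancel' (Nat.dvd_div_of_mul_dvd hdvd)]

theorem Nat.div_gcd_ne_one_of_lt {m n : ℕ} (hm : 0 < m) (hmn : m < n) : n / m.gcd n ≠ 1 := by
  intro h
  have hgcd := Nat.div_mul_cancel (Nat.gcd_dvd_right m n)
  rw [h, one_mul] at hgcd
  have hdvd : n ∣ m := hgcd ▸ Nat.gcd_dvd_left m n
  exact absurd (Nat.le_of_dvd hm hdvd) (by omega)

theorem Nat.not_prime_pow_add_one_of_odd {a e : ℕ} (ha : 1 < a) (he : Odd e) (he1 : e ≠ 1) :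
    ¬ (a ^ e + 1).Prime := fun hp => by
  obtain ⟨k, rfl⟩ := Nat.pow_of_pow_add_prime ha he.pos.ne' hp
  rcases k with _ | k
  · exact he1 rfl
  · exact Nat.not_even_iff_odd.2 he (by simp [pow_succ])

theorem stmt2_general (n1 M w1 w2 ρ1 ρ2 : ℕ)
    (hM : 0 < M)
    (hw1odd : Odd w1) (hw2odd : Odd w2)
    (hlt : w1 < w2) (hd1 : w1 ∣ M) (hd2 : w2 ∣ M)
    (hρ1 : 0 < ρ1)
    (he1 : n1 = ρ1 ^ w1) (he2 : n1 = ρ2 ^ w2)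
    (hp1 : (ρ1 * 2 ^ (M / w1) + 1).Prime) : False := by
  set e := w2 / w1.gcd w2
  set k := M / w1.lcm w2
  obtain ⟨c, hc, -⟩ :=
    Nat.exists_eq_pow_of_pow_eq_pow (.inl hw1odd.pos.ne') (he1.symm.trans he2)
  have he_odd : Odd e := hw2odd.of_dvd_nat (Nat.div_dvd_of_dvd (Nat.gcd_dvd_right w1 w2))
  have hc_pos : 0 < c := (Nat.pow_pos_iff.1 (hc ▸ hρ1)).resolve_right he_odd.pos.ne'
  have hk_pos : 0 < k := Nat.div_pos (Nat.le_of_dvd hM (Nat.lcm_dvd hd1 hd2))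
    (Nat.lcm_pos hw1odd.pos hw2odd.pos)
  have hbase : 1 < c * 2 ^ k :=
    lt_of_lt_of_le (Nat.one_lt_two_pow hk_pos.ne') (Nat.le_mul_of_pos_left _ hc_pos)
  refine Nat.not_prime_pow_add_one_of_odd hbase he_odd (Nat.div_gcd_ne_one_of_lt hw1odd.pos hlt) ?_
  rwa [mul_pow, ← pow_mul, mul_comm k, ← Nat.div_eq_div_gcd_mul_div_lcm hd1 hd2, ← hc]

theorem stmt2 (n1 M w1 w2 ρ1 ρ2 : ℕ)
    (hn1 : 3 ≤ n1) (hn1odd : Odd n1) (hM : 0 < M)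
    (hw1 : 3 ≤ w1) (hw2 : 3 ≤ w2) (hw1odd : Odd w1) (hw2odd : Odd w2)
    (hlt : w1 < w2) (hd1 : w1 ∣ M) (hd2 : w2 ∣ M)
    (hρ1 : 0 < ρ1) (hρ2 : 0 < ρ2)
    (he1 : n1 = ρ1 ^ w1) (he2 : n1 = ρ2 ^ w2)
    (hp1 : (ρ1 * 2 ^ (M / w1) + 1).Prime)
    (hp2 : (ρ2 * 2 ^ (M / w2) + 1).Prime) : False :=
  stmt2_general n1 M w1 w2 ρ1 ρ2 hM hw1odd hw2odd hlt hd1 hd2 hρ1 he1 he2 hp1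
end

section
/- If a composite number N with the Lehmer property has exactly k distinct prime factors, then 2^k divides N − 1; in particular, if N = C_n = n·2^n + 1 is a Cullen number with the Lehmer property, then 2^k ∣ n·2^n, hence k ≤ n + log₂ n. -/
/-! A Lehmer number N is odd, since φ(N) is even for N > 2 and divides N - 1. Each prime factor
p of an odd N contributes the even factor p - 1 to φ(N), so 2^k ∣ φ(N) ∣ N - 1. For a Cullen
number N - 1 = n·2^n, and taking log₂ of 2^k ≤ n·2^n gives the bound. -/

namespace Nat

theorem prod_primeFactors_sub_one_dvd_totient (n : ℕ) :
    ∏ p ∈ n.primeFactors, (p - 1) ∣ φ n :=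
  Dvd.intro_left _ (totient_eq_div_primeFactors_mul n).symm

theorem two_pow_card_primeFactors_dvd_totient {n : ℕ} (hn : Odd n) :
    2 ^ n.primeFactors.card ∣ φ n := by
  refine Finset.prod_const 2 ▸ (Finset.prod_dvd_prod_of_dvd _ _ fun p hp => ?_).trans
    (prod_primeFactors_sub_one_dvd_totient n)
  have hp_odd : Odd p := hn.of_dvd_nat (dvd_of_mem_primeFactors hp)
  exact (Nat.Odd.sub_odd hp_odd odd_one).two_dvd

theorem odd_of_totient_dvd_sub_one {n : ℕ} (hn : 2 < n) (h : φ n ∣ n - 1) : Odd n := by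
  obtain ⟨a, ha⟩ := (totient_even hn).two_dvd.trans h
  rw [← not_even_iff_odd]
  rintro ⟨b, hb⟩
  omega

end Nat

theorem Real.le_add_logb_of_pow_le {b x : ℝ} {k n : ℕ} (hb : 1 < b) (hx : 0 < x)
    (h : b ^ k ≤ x * b ^ n) : (k : ℝ) ≤ n + logb b x := by
  have hb0 : 0 < b := by linarith
  have := (logb_le_logb hb (by positivity) (by positivity : (0 : ℝ) < x * b ^ n)).mpr h
  rwa [logb_mul hx.ne' (pow_pos hb0 n).ne', logb_pow, logb_pow, logb_self_eq_one hb,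
    mul_one, mul_one, add_comm] at this

theorem stmt15 (N k : ℕ) (hN : 1 < N) (hcomp : ¬ N.Prime)
    (hlehmer : Nat.totient N ∣ N - 1) (hk : k = N.primeFactors.card) :
    2 ^ k ∣ N - 1 ∧
      ∀ n : ℕ, 0 < n → N = n * 2 ^ n + 1 →
        2 ^ k ∣ n * 2 ^ n ∧ (k : ℝ) ≤ (n : ℝ) + Real.logb 2 n := by
  subst hk
  have hN2 : 2 < N := lt_of_le_of_ne hN fun h => hcomp (h ▸ Nat.prime_two)
  have hdvd := (Nat.two_pow_card_primeFactors_dvd_totient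
    (Nat.odd_of_totient_dvd_sub_one hN2 hlehmer)).trans hlehmer
  refine ⟨hdvd, fun n hn hNn => ?_⟩
  subst hNn
  rw [Nat.add_sub_cancel] at hdvd
  refine ⟨hdvd, Real.le_add_logb_of_pow_le one_lt_two (Nat.cast_pos.mpr hn) ?_⟩
  exact_mod_cast Nat.le_of_dvd (by positivity) hdvd
end
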